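/- For all n, ℓ, ℓ' ∈ ℕ₀ with n ≤ ℓ and n ≤ ℓ', the n-th derivatives of the Legendre polynomials satisfy the weighted orthogonality relation ∫_{−1}^1 P_ℓ^{(n)}(μ) P_{ℓ'}^{(n)}(μ) (1−μ²)^n dμ = δ_{ℓℓ'} · 2/(2ℓ+1) · (ℓ+n)!/(ℓ−n)!, where δ_{ℓℓ'} equals 1 if ℓ = ℓ' and 0 otherwise. -/

import Mathlib

open MeasureTheory Real

noncomputable section

/-- Legendre polynomials via Rodrigues' formula. -/
def legendreP (ℓ : ℕ) (μ : ℝ) : ℝ :=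
  ((2:ℝ) ^ ℓ * ℓ.factorial)⁻¹ * iteratedDeriv ℓ (fun x : ℝ => (x ^ 2 - 1) ^ ℓ) μ

namespace LegAux
open Polynomial

/-- R ℓ = (X²-1)^ℓ -/
def R (ℓ : ℕ) : ℝ[X] := ((X:ℝ[X])^2 - 1)^ℓ

lemma eval_R (ℓ : ℕ) (x : ℝ) : (R ℓ).eval x = (x^2 - 1)^ℓ := by
  simp [R]

/-- iterated deriv of polynomial eval is eval of iterated polynomial derivative -/
lemma iteratedDeriv_eval (p : ℝ[X]) (k : ℕ) :
    iteratedDeriv k (fun x : ℝ => p.eval x) = fun x => (derivative^[k] p).eval x := by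
  induction k with
  | zero => simp
  | succ k ih =>
    rw [iteratedDeriv_succ, ih, Function.iterate_succ_apply']
    funext x
    exact Polynomial.deriv _

lemma contE (p : ℝ[X]) : Continuous fun x : ℝ => p.eval x := p.continuous_aeval

lemma intervalIntegrable_eval (p : ℝ[X]) :
    IntervalIntegrable (fun x => p.eval x) volume (-1) 1 :=
  (p.continuous_aeval).intervalIntegrable _ _

/-- basic integration-by-parts for polynomials on [-1,1] -/
lemma ibp (p q : ℝ[X]) :
    ∫ x in (-1:ℝ)..1, (derivative p).eval x * q.eval x
      = p.eval 1 * q.eval 1 - p.eval (-1) * q.eval (-1)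
        - ∫ x in (-1:ℝ)..1, p.eval x * (derivative q).eval x := by
  have h : ∫ x in (-1:ℝ)..1, (derivative (p*q)).eval x
      = (p*q).eval 1 - (p*q).eval (-1) := by
    apply intervalIntegral.integral_eq_sub_of_hasDerivAt
      (fun x _ => Polynomial.hasDerivAt (p*q) x)
    exact intervalIntegrable_eval _
  rw [derivative_mul] at h
  simp only [eval_add, eval_mul] at h
  rw [intervalIntegral.integral_add (f := fun x => (derivative p).eval x * q.eval x)
      (g := fun x => p.eval x * (derivative q).eval x)
      (((contE (derivative p)).mul (contE q)).intervalIntegrable _ _)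
      (((contE p).mul (contE (derivative q))).intervalIntegrable _ _)] at h
  linarith

/-- eval vanishing from divisibility by (X²-1)^m -/
lemma eval_zero_of_dvd {p : ℝ[X]} {m : ℕ} (hm : 0 < m)
    (h : ((X:ℝ[X])^2 - 1)^m ∣ p) {x : ℝ} (hx : x = 1 ∨ x = -1) : p.eval x = 0 := by
  obtain ⟨q, rfl⟩ := h
  have : x^2 - 1 = 0 := by rcases hx with h | h <;> simp [h]
  simp [this, zero_pow hm.ne']

/-- repeated integration by parts with vanishing boundary terms -/
lemma ibp_iter (m : ℕ) (p q : ℝ[X])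
    (h : ∀ j, j < m → ∀ x : ℝ, x = 1 ∨ x = -1 →
      (derivative^[m-1-j] q).eval x * (derivative^[j] p).eval x = 0) :
    ∫ x in (-1:ℝ)..1, (derivative^[m] q).eval x * p.eval x
      = (-1:ℝ)^m * ∫ x in (-1:ℝ)..1, q.eval x * (derivative^[m] p).eval x := by
  induction m generalizing q p with
  | zero => simp
  | succ m ih =>
    have h1 : ∫ x in (-1:ℝ)..1, (derivative^[m+1] q).eval x * p.eval x
        = (-1:ℝ)^m * ∫ x in (-1:ℝ)..1, (derivative q).eval x * (derivative^[m] p).eval x := by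
      rw [Function.iterate_succ_apply]
      apply ih p (derivative q)
      intro j hj x hx
      have := h j (by omega) x hx
      rwa [show m + 1 - 1 - j = (m - 1 - j) + 1 by omega, Function.iterate_succ_apply] at this
    rw [h1, ibp q (derivative^[m] p)]
    have hb1 := h m (by omega) 1 (Or.inl rfl)
    have hb2 := h m (by omega) (-1) (Or.inr rfl)
    simp only [show m + 1 - 1 - m = 0 by omega, Function.iterate_zero_apply] at hb1 hb2
    rw [hb1, hb2, ← Function.iterate_succ_apply' derivative]
    ring

/-- the basic integral -/
lemma J_int (ℓ : ℕ) :
    ∫ x in (-1:ℝ)..1, (x^2-1)^ℓ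
      = (-1:ℝ)^ℓ * 2^(2*ℓ+1) * (ℓ.factorial:ℝ)^2 / ((2*ℓ+1).factorial:ℝ) := by
  induction ℓ with
  | zero => norm_num
  | succ ℓ ih =>
    -- FTC on F x = x * (x^2-1)^(ℓ+1)
    have hftc : ∫ x in (-1:ℝ)..1,
          ((x^2-1)^(ℓ+1) + x * ((ℓ+1) * (2*x) * (x^2-1)^ℓ)) = 0 := by
      have : ∀ x ∈ Set.uIcc (-1:ℝ) 1, HasDerivAt (fun x : ℝ => x * (x^2-1)^(ℓ+1))
          ((x^2-1)^(ℓ+1) + x * ((ℓ+1) * (2*x) * (x^2-1)^ℓ)) x := by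
        intro x _
        have h1 : HasDerivAt (fun x : ℝ => (x^2-1)^(ℓ+1))
            (((ℓ+1):ℝ) * (x^2-1)^ℓ * (2*x)) x := by
          have := ((hasDerivAt_pow 2 x).sub_const 1).fun_pow (ℓ+1)
          simpa [mul_comm, mul_assoc, mul_left_comm] using this
        have := (hasDerivAt_id x).fun_mul h1
        refine this.congr_deriv ?_
        simp only [id_eq, one_mul]
        ring
      rw [intervalIntegral.integral_eq_sub_of_hasDerivAt this ?_]
      · norm_num
      · apply Continuous.intervalIntegrable; continuity
    have hsplit : ∀ x : ℝ, x * ((ℓ+1:ℝ) * (2*x) * (x^2-1)^ℓ)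
        = 2*(ℓ+1) * ((x^2-1)^(ℓ+1) + (x^2-1)^ℓ) := by
      intro x; ring
    simp only [hsplit] at hftc
    rw [intervalIntegral.integral_add
        (Continuous.intervalIntegrable (by continuity) _ _)
        (Continuous.intervalIntegrable (by continuity) _ _),
      intervalIntegral.integral_const_mul,
      intervalIntegral.integral_add
        (Continuous.intervalIntegrable (by continuity) _ _)
        (Continuous.intervalIntegrable (by continuity) _ _), ih] at hftc
    -- hftc : J(ℓ+1) + 2(ℓ+1)*(J(ℓ+1) + Jℓ formula) = 0
    have hJ : (∫ x in (-1:ℝ)..1, (x^2-1)^(ℓ+1))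
        = -(2*(ℓ:ℝ)+2) * ((-1)^ℓ * 2^(2*ℓ+1) * (ℓ.factorial:ℝ)^2 / ((2*ℓ+1).factorial:ℝ)) / (2*(ℓ:ℝ)+3) := by
      have h3 : (2*(ℓ:ℝ)+3) ≠ 0 := by positivity
      have hne : ((2*ℓ+1).factorial : ℝ) ≠ 0 := Nat.cast_ne_zero.2 (Nat.factorial_ne_zero _)
      have h0 := hftc
      field_simp at h0
      field_simp
      linear_combination h0
    have hfac : ((2*(ℓ+1)+1).factorial : ℝ)
        = (2*(ℓ:ℝ)+3) * (2*(ℓ:ℝ)+2) * ((2*ℓ+1).factorial : ℝ) := by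
      have h1 : 2*(ℓ+1)+1 = (2*ℓ+1) + 1 + 1 := by omega
      rw [h1]
      push_cast [Nat.factorial_succ]
      ring
    rw [hJ, hfac]
    have hne : ((2*ℓ+1).factorial : ℝ) ≠ 0 := Nat.cast_ne_zero.2 (Nat.factorial_ne_zero _)
    have h3 : (2*(ℓ:ℝ)+3) ≠ 0 := by positivity
    have h2 : (2*(ℓ:ℝ)+2) ≠ 0 := by positivity
    push_cast [Nat.factorial_succ]
    field_simp
    ring


lemma monicR (ℓ : ℕ) : (((X:ℝ[X])^2 - 1)^ℓ).Monic := by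
  have : ((X:ℝ[X])^2 - 1) = X^2 - C 1 := by simp
  rw [this]
  exact (monic_X_pow_sub_C (1:ℝ) (by norm_num)).pow _

lemma natDegreeR (ℓ : ℕ) : (R ℓ).natDegree = 2*ℓ := by
  have : ((X:ℝ[X])^2 - 1) = X^2 - C 1 := by simp
  rw [R, this, Monic.natDegree_pow, natDegree_X_pow_sub_C]
  · ring
  · exact monic_X_pow_sub_C (1:ℝ) (by norm_num)

lemma coeffR (ℓ : ℕ) : (R ℓ).coeff (2*ℓ) = 1 := by
  have := (monicR ℓ).coeff_natDegree
  rwa [← R, natDegreeR] at this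

/-- iterated derivative of a polynomial of degree ≤ m, taken m times, is constant -/
lemma iter_deriv_const (p : ℝ[X]) (m : ℕ) (h : p.natDegree ≤ m) :
    derivative^[m] p = C ((m.factorial : ℝ) * p.coeff m) := by
  have h0 : (derivative^[m] p).natDegree ≤ 0 := by
    have := natDegree_iterate_derivative p m
    omega
  have := eq_C_of_natDegree_le_zero h0
  rwa [coeff_iterate_derivative, zero_add, Nat.descFactorial_self, nsmul_eq_mul] at this

lemma iteratedDeriv_legendre (n ℓ : ℕ) :
    iteratedDeriv n (legendreP ℓ)
      = fun μ => ((2:ℝ)^ℓ * ℓ.factorial)⁻¹ * (derivative^[ℓ+n] (R ℓ)).eval μ := by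
  have h1 : legendreP ℓ = fun μ => (C (((2:ℝ)^ℓ * ℓ.factorial)⁻¹) * derivative^[ℓ] (R ℓ)).eval μ := by
    funext μ
    rw [legendreP, show (fun x : ℝ => (x^2-1)^ℓ) = fun x => (R ℓ).eval x from funext fun x => (eval_R ℓ x).symm,
      iteratedDeriv_eval]
    simp
  rw [h1, iteratedDeriv_eval]
  funext μ
  rw [iterate_derivative_C_mul, show derivative^[n] (derivative^[ℓ] (R ℓ)) = derivative^[ℓ+n] (R ℓ) by
    rw [add_comm, Function.iterate_add_apply]]
  simp

lemma dvd_g (n ℓ : ℕ) :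
    ((X:ℝ[X])^2-1)^n ∣ derivative^[ℓ+n] (R ℓ) * ((1:ℝ[X]) - X^2)^n :=
  ⟨(-1)^n * derivative^[ℓ+n] (R ℓ), by
    rw [show ((1:ℝ[X]) - X^2) = -1 * (X^2 - 1) by ring, mul_pow]; ring⟩

/-- the key reduction via repeated integration by parts -/
lemma key (n ℓ ℓ' : ℕ) (hn : n ≤ ℓ) (hn' : n ≤ ℓ') :
    ∫ x in (-1:ℝ)..1, (derivative^[ℓ'+n] (R ℓ')).eval x
        * (derivative^[ℓ+n] (R ℓ) * ((1:ℝ[X]) - X^2)^n).eval x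
      = (-1:ℝ)^(ℓ'+n) * ∫ x in (-1:ℝ)..1, (R ℓ').eval x
        * (derivative^[ℓ'+n] (derivative^[ℓ+n] (R ℓ) * ((1:ℝ[X]) - X^2)^n)).eval x := by
  apply ibp_iter
  intro j hj x hx
  by_cases hjn : j < n
  · have hd := pow_sub_dvd_iterate_derivative_of_pow_dvd j (dvd_g n ℓ)
    rw [eval_zero_of_dvd (by omega) hd hx, mul_zero]
  · have hk : ℓ'+n-1-j < ℓ' := by omega
    have hd : ((X:ℝ[X])^2-1)^(ℓ' - (ℓ'+n-1-j)) ∣ derivative^[ℓ'+n-1-j] (R ℓ') :=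
      pow_sub_dvd_iterate_derivative_pow _ _ _
    rw [eval_zero_of_dvd (by omega) hd hx, zero_mul]

lemma natDegree_g_le (n ℓ : ℕ) (hn : n ≤ ℓ) :
    (derivative^[ℓ+n] (R ℓ) * ((1:ℝ[X]) - X^2)^n).natDegree ≤ ℓ + n := by
  apply (natDegree_mul_le).trans
  have h1 : (derivative^[ℓ+n] (R ℓ)).natDegree ≤ ℓ - n := by
    have := natDegree_iterate_derivative (R ℓ) (ℓ+n)
    rw [natDegreeR] at this
    omega
  have h2 : (((1:ℝ[X]) - X^2)^n).natDegree ≤ 2*n := by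
    refine (natDegree_pow_le).trans ?_
    have h3 : ((1:ℝ[X]) - X^2).natDegree ≤ 2 := by compute_degree
    calc n * ((1:ℝ[X]) - X^2).natDegree ≤ n * 2 := Nat.mul_le_mul_left n h3
    _ = 2*n := by ring
  omega


lemma integral_eq (n ℓ ℓ' : ℕ) :
    (∫ μ in (-1:ℝ)..1,
        iteratedDeriv n (legendreP ℓ) μ * iteratedDeriv n (legendreP ℓ') μ * (1 - μ^2)^n)
      = (((2:ℝ)^ℓ * ℓ.factorial)⁻¹ * ((2:ℝ)^ℓ' * ℓ'.factorial)⁻¹) *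
        ∫ x in (-1:ℝ)..1, (derivative^[ℓ'+n] (R ℓ')).eval x
          * (derivative^[ℓ+n] (R ℓ) * ((1:ℝ[X]) - X^2)^n).eval x := by
  rw [← intervalIntegral.integral_const_mul]
  apply intervalIntegral.integral_congr
  intro x _
  rw [iteratedDeriv_legendre, iteratedDeriv_legendre]
  simp only [eval_mul, eval_pow, eval_sub, eval_one, eval_X]
  ring

lemma integral_zero_of_lt (n ℓ ℓ' : ℕ) (hn : n ≤ ℓ) (hn' : n ≤ ℓ') (hlt : ℓ < ℓ') :
    (∫ μ in (-1:ℝ)..1,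
        iteratedDeriv n (legendreP ℓ) μ * iteratedDeriv n (legendreP ℓ') μ * (1 - μ^2)^n) = 0 := by
  rw [integral_eq, key n ℓ ℓ' hn hn',
    iterate_derivative_eq_zero (lt_of_le_of_lt (natDegree_g_le n ℓ hn) (by omega))]
  simp

lemma coeff_w (n : ℕ) : (((1:ℝ[X]) - X^2)^n).coeff (2*n) = (-1)^n := by
  have h : ((1:ℝ[X]) - X^2) = C (-1) * (X^2 - 1) := by
    rw [C_neg, C_1]; ring
  have hc := coeffR n
  simp only [R] at hc
  rw [h, mul_pow, ← C_pow, coeff_C_mul, hc, mul_one]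

lemma coeff_g (n ℓ : ℕ) (hn : n ≤ ℓ) :
    (derivative^[ℓ+n] (R ℓ) * ((1:ℝ[X]) - X^2)^n).coeff (ℓ+n)
      = ((2*ℓ).descFactorial (ℓ+n) : ℝ) * (-1)^n := by
  have h1 : (derivative^[ℓ+n] (R ℓ)).natDegree ≤ ℓ - n := by
    have := natDegree_iterate_derivative (R ℓ) (ℓ+n)
    rw [natDegreeR] at this; omega
  have h2 : (((1:ℝ[X]) - X^2)^n).natDegree ≤ 2*n := by
    refine (natDegree_pow_le).trans ?_
    have h3 : ((1:ℝ[X]) - X^2).natDegree ≤ 2 := by compute_degree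
    calc n * ((1:ℝ[X]) - X^2).natDegree ≤ n * 2 := Nat.mul_le_mul_left n h3
    _ = 2*n := by ring
  have hmain : (derivative^[ℓ+n] (R ℓ) * ((1:ℝ[X]) - X^2)^n).coeff ((ℓ-n) + 2*n)
      = ((2*ℓ).descFactorial (ℓ+n) : ℝ) * (-1)^n := by
    rw [coeff_mul_add_eq_of_natDegree_le h1 h2, coeff_iterate_derivative, coeff_w,
      show ℓ - n + (ℓ+n) = 2*ℓ by omega, coeffR, nsmul_eq_mul, mul_one]
  rw [show (ℓ-n) + 2*n = ℓ+n by omega] at hmain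
  exact hmain

lemma integral_diag (n ℓ : ℕ) (hn : n ≤ ℓ) :
    (∫ μ in (-1:ℝ)..1,
        iteratedDeriv n (legendreP ℓ) μ * iteratedDeriv n (legendreP ℓ) μ * (1 - μ^2)^n)
      = (2 / (2 * (ℓ:ℝ) + 1)) * (((ℓ + n).factorial : ℝ) / ((ℓ - n).factorial : ℝ)) := by
  rw [integral_eq, key n ℓ ℓ hn hn,
    iter_deriv_const _ _ (natDegree_g_le n ℓ hn), coeff_g n ℓ hn]
  have hInt : (∫ x in (-1:ℝ)..1, (R ℓ).eval x
      * (C (((ℓ+n).factorial : ℝ) * (((2*ℓ).descFactorial (ℓ+n) : ℝ) * (-1)^n))).eval x)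
      = (((ℓ+n).factorial : ℝ) * (((2*ℓ).descFactorial (ℓ+n) : ℝ) * (-1)^n))
        * ((-1:ℝ)^ℓ * 2^(2*ℓ+1) * (ℓ.factorial:ℝ)^2 / ((2*ℓ+1).factorial:ℝ)) := by
    simp only [eval_C, eval_R]
    rw [intervalIntegral.integral_mul_const, J_int, mul_comm]
  rw [hInt]
  -- arithmetic
  have hdesc : ((ℓ-n).factorial : ℝ) * ((2*ℓ).descFactorial (ℓ+n) : ℝ) = ((2*ℓ).factorial : ℝ) := by
    rw [← Nat.cast_mul, show (ℓ-n) = 2*ℓ - (ℓ+n) by omega,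
      Nat.factorial_mul_descFactorial (by omega)]
  have hfac21 : ((2*ℓ+1).factorial : ℝ) = (2*(ℓ:ℝ)+1) * ((2*ℓ).factorial : ℝ) := by
    rw [Nat.factorial_succ]; push_cast; ring
  have hsign : (-1:ℝ)^(ℓ+n) * ((-1:ℝ)^n * (-1:ℝ)^ℓ) = 1 := by
    rw [← pow_add, ← pow_add, show ℓ + n + (n + ℓ) = 2*(ℓ+n) by omega, pow_mul]
    norm_num
  have hpow : (2:ℝ)^(2*ℓ+1) = 2 * ((2:ℝ)^ℓ)^2 := by
    rw [pow_succ, ← pow_mul]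
    ring
  have hne1 : ((2*ℓ).factorial : ℝ) ≠ 0 := Nat.cast_ne_zero.2 (Nat.factorial_ne_zero _)
  have hne2 : ((ℓ-n).factorial : ℝ) ≠ 0 := Nat.cast_ne_zero.2 (Nat.factorial_ne_zero _)
  have hne3 : (ℓ.factorial : ℝ) ≠ 0 := Nat.cast_ne_zero.2 (Nat.factorial_ne_zero _)
  have hne4 : ((2:ℝ)^ℓ) ≠ 0 := by positivity
  have hne5 : (2*(ℓ:ℝ)+1) ≠ 0 := by positivity
  have hD : ((2*ℓ).descFactorial (ℓ+n) : ℝ) = ((2*ℓ).factorial : ℝ) / ((ℓ-n).factorial : ℝ) := by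
    field_simp
    linarith [hdesc]
  rw [hD, hfac21, hpow]
  field_simp
  ring_nf
  simp only [pow_mul', neg_one_sq, one_pow]
  ring

end LegAux

/-- Weighted orthogonality of the `n`-th derivatives of the Legendre polynomials:
for `n ≤ ℓ` and `n ≤ ℓ'`,
`∫_{-1}^1 P_ℓ^{(n)} P_{ℓ'}^{(n)} (1-μ²)^n dμ = δ_{ℓℓ'} · 2/(2ℓ+1) · (ℓ+n)!/(ℓ-n)!`. -/
theorem legendre_deriv_weighted_orthogonality (n ℓ ℓ' : ℕ) (hℓ : n ≤ ℓ) (hℓ' : n ≤ ℓ') :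
    (∫ μ in (-1:ℝ)..1,
        iteratedDeriv n (legendreP ℓ) μ * iteratedDeriv n (legendreP ℓ') μ * (1 - μ^2)^n)
      = (if ℓ = ℓ' then (1:ℝ) else 0) * (2 / (2 * (ℓ:ℝ) + 1)) *
          (((ℓ + n).factorial : ℝ) / ((ℓ - n).factorial : ℝ)) := by
  by_cases h : ℓ = ℓ'
  · subst h
    rw [if_pos rfl, one_mul]
    exact LegAux.integral_diag n ℓ hℓ
  · rw [if_neg h, zero_mul, zero_mul]
    rcases lt_or_gt_of_ne h with hlt | hgt
    · exact LegAux.integral_zero_of_lt n ℓ ℓ' hℓ hℓ' hlt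
    · rw [intervalIntegral.integral_congr
        (g := fun μ => iteratedDeriv n (legendreP ℓ') μ * iteratedDeriv n (legendreP ℓ) μ
          * (1 - μ^2)^n) (fun x _ => by ring)]
      exact LegAux.integral_zero_of_lt n ℓ' ℓ hℓ' hℓ hgt

end
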